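/- Active-component degree bound (the key claim in Lemma 5 of the paper): Let T₀ be a finite tree with vertex set V₀ and let v ∈ V₀ be a distinguished vertex. Let 𝒞 be a partition of V₀ such that every part induces a connected subgraph of T₀, and suppose 𝒞 is split into two disjoint subfamilies 𝒞_A (active) and 𝒞_I (inactive) with 𝒞_A nonempty. Let C_v denote the part containing v, and assume every part C ∈ 𝒞_I with C ≠ C_v satisfies |δ(C) ∩ E(T₀)| ≥ 2. Then: if C_v ∈ 𝒞_A, ∑_{C ∈ 𝒞_A} |δ(C) ∩ E(T₀)| ≤ 2|𝒞_A| − 2; and if C_v ∈ 𝒞_I, ∑_{C ∈ 𝒞_A} |δ(C) ∩ E(T₀)| ≤ 2|𝒞_A| − 1. -/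

import Mathlib

open scoped Classical

/-- An edge `e` crosses the cut `δ(C)`: it has exactly one endpoint in `C`. -/
def Crosses {V : Type*} (e : Sym2 V) (C : Finset V) : Prop :=
  ∃ u v, e = s(u, v) ∧ u ∈ C ∧ v ∉ C

/-!
Summing `#δ(C)` over all parts counts every edge of `T₀` joining two different parts twice and
no other edge. A part `C` induces a subtree, so it contains `#C - 1` edges; hence the edges inside
parts number `#V - #𝒞`, the edges between parts `#𝒞 - 1`, and the total is `2 * #𝒞 - 2`.
Every inactive part other than `C_v` contributes at least `2`, and `C_v`, when inactive, at least
`1`, since some active part lies outside it; subtracting gives both bounds.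
-/

open Finset

section

variable {V : Type*}

lemma crosses_mk_iff {u w : V} {C : Finset V} :
    Crosses s(u, w) C ↔ u ∈ C ∧ w ∉ C ∨ w ∈ C ∧ u ∉ C := by
  constructor
  · rintro ⟨a, b, hab, ha, hb⟩
    rcases Sym2.eq_iff.mp hab with ⟨rfl, rfl⟩ | ⟨rfl, rfl⟩ <;> tauto
  · rintro (⟨hu, hw⟩ | ⟨hw, hu⟩)
    · exact ⟨u, w, rfl, hu, hw⟩
    · exact ⟨w, u, Sym2.eq_swap, hw, hu⟩

lemma ite_crosses_add_two_mul_ite_mem_sym2 [DecidableEq V] (u w : V) (C : Finset V) :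
    (if Crosses s(u, w) C then 1 else 0) + 2 * (if s(u, w) ∈ C.sym2 then 1 else 0) =
      (if u ∈ C then 1 else 0) + (if w ∈ C then 1 else 0) := by
  by_cases hu : u ∈ C <;> by_cases hw : w ∈ C <;> simp [crosses_mk_iff, hu, hw]

lemma card_filter_crosses_pos [Fintype V] {G : SimpleGraph V} [DecidableRel G.Adj]
    (hG : G.Connected) {C : Finset V} {x y : V} (hx : x ∈ C) (hy : y ∉ C) :
    0 < #(G.edgeFinset.filter (Crosses · C)) := by
  obtain ⟨d, -, hd₁, hd₂⟩ := (hG.preconnected x y).some.exists_boundary_dart (C : Set V) hx hy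
  exact card_pos.mpr
    ⟨d.edge, mem_filter.mpr ⟨G.mem_edgeFinset.mpr d.edge_mem, d.fst, d.snd, rfl, hd₁, hd₂⟩⟩

section Partition

variable [Fintype V] [DecidableEq V] {𝒞 : Finset (Finset V)}

lemma card_filter_mem_eq_one (hdisj : (𝒞 : Set (Finset V)).PairwiseDisjoint id)
    (hcover : 𝒞.biUnion id = univ) (x : V) : #(𝒞.filter (x ∈ ·)) = 1 := by
  obtain ⟨C, hC, hxC⟩ := mem_biUnion.mp (hcover ▸ mem_univ x)
  refine card_eq_one.mpr ⟨C, eq_singleton_iff_unique_mem.mpr ⟨mem_filter.mpr ⟨hC, hxC⟩, ?_⟩⟩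
  intro D hD
  rw [mem_filter] at hD
  by_contra hDC
  exact disjoint_left.mp (hdisj hD.1 hC hDC) hD.2 hxC

lemma card_filter_crosses_add_two_mul_card_filter_mem_sym2
    (hdisj : (𝒞 : Set (Finset V)).PairwiseDisjoint id) (hcover : 𝒞.biUnion id = univ)
    (e : Sym2 V) :
    #(𝒞.filter (Crosses e ·)) + 2 * #(𝒞.filter (e ∈ ·.sym2)) = 2 := by
  induction e using Sym2.ind with
  | h u w =>
    calc #(𝒞.filter (Crosses s(u, w) ·)) + 2 * #(𝒞.filter (s(u, w) ∈ ·.sym2))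
        = ∑ C ∈ 𝒞, ((if u ∈ C then 1 else 0) + (if w ∈ C then 1 else 0)) := by
          simp only [card_filter, mul_sum, ← sum_add_distrib,
            ite_crosses_add_two_mul_ite_mem_sym2]
      _ = #(𝒞.filter (u ∈ ·)) + #(𝒞.filter (w ∈ ·)) := by
          rw [sum_add_distrib, card_filter, card_filter]
      _ = 2 := by rw [card_filter_mem_eq_one hdisj hcover, card_filter_mem_eq_one hdisj hcover]

lemma sum_card_filter_crosses_add_two_mul_sum_card_filter_mem_sym2
    (hdisj : (𝒞 : Set (Finset V)).PairwiseDisjoint id) (hcover : 𝒞.biUnion id = univ)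
    (E : Finset (Sym2 V)) :
    ∑ C ∈ 𝒞, #(E.filter (Crosses · C)) + 2 * ∑ C ∈ 𝒞, #(E.filter (· ∈ C.sym2)) = 2 * #E := by
  calc ∑ C ∈ 𝒞, #(E.filter (Crosses · C)) + 2 * ∑ C ∈ 𝒞, #(E.filter (· ∈ C.sym2))
      = ∑ e ∈ E, (#(𝒞.filter (Crosses e ·)) + 2 * #(𝒞.filter (e ∈ ·.sym2))) := by
        rw [sum_add_distrib, ← mul_sum]
        exact congrArg₂ (· + 2 * ·)
          (sum_card_bipartiteAbove_eq_sum_card_bipartiteBelow _).symm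
          (sum_card_bipartiteAbove_eq_sum_card_bipartiteBelow _).symm
    _ = ∑ _e ∈ E, 2 :=
        sum_congr rfl fun e _ =>
          card_filter_crosses_add_two_mul_card_filter_mem_sym2 hdisj hcover e
    _ = 2 * #E := by rw [sum_const, smul_eq_mul, mul_comm]

lemma card_filter_edgeFinset_mem_sym2_add_one {G : SimpleGraph V} [DecidableRel G.Adj]
    (hG : G.IsAcyclic) {C : Finset V} (hC : (G.induce (C : Set V)).Connected) :
    #(G.edgeFinset.filter (· ∈ C.sym2)) + 1 = #C := by
  have hmap := congrArg card (G.map_edgeFinset_induce (s := (C : Set V)))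
  rw [card_map, toFinset_coe, ← filter_mem_eq_inter] at hmap
  rw [← hmap]
  convert (show (G.induce (C : Set V)).IsTree from ⟨hC, hG.induce _⟩).card_edgeFinset
  simp

theorem sum_card_filter_crosses_add_two {G : SimpleGraph V} [DecidableRel G.Adj] (hG : G.IsTree)
    (hdisj : (𝒞 : Set (Finset V)).PairwiseDisjoint id) (hcover : 𝒞.biUnion id = univ)
    (hconn : ∀ C ∈ 𝒞, (G.induce (C : Set V)).Connected) :
    ∑ C ∈ 𝒞, #(G.edgeFinset.filter (Crosses · C)) + 2 = 2 * #𝒞 := by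
  have hcount :=
    sum_card_filter_crosses_add_two_mul_sum_card_filter_mem_sym2 hdisj hcover G.edgeFinset
  have hinside : ∑ C ∈ 𝒞, #(G.edgeFinset.filter (· ∈ C.sym2)) + #𝒞 = Fintype.card V := by
    rw [card_eq_sum_ones 𝒞, ← sum_add_distrib,
      sum_congr rfl fun C hC => card_filter_edgeFinset_mem_sym2_add_one hG.isAcyclic (hconn C hC),
      ← card_univ, ← hcover, card_biUnion hdisj]
    rfl
  have hedges := hG.card_edgeFinset
  omega

end Partition

end

theorem active_component_degree_bound_general
    {V : Type*} [Fintype V] [DecidableEq V]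
    (T₀ : SimpleGraph V) (htree : T₀.IsTree) (v : V)
    (𝒞A 𝒞I : Finset (Finset V))
    (hAI : Disjoint 𝒞A 𝒞I)
    (hdisj : ∀ C ∈ 𝒞A ∪ 𝒞I, ∀ C' ∈ 𝒞A ∪ 𝒞I, C ≠ C' → Disjoint C C')
    (hcover : (𝒞A ∪ 𝒞I).biUnion id = Finset.univ)
    (hconn : ∀ C ∈ 𝒞A ∪ 𝒞I, (T₀.induce (C : Set V)).Connected)
    (hAne : 𝒞A.Nonempty)
    (Cv : Finset V) (hvCv : v ∈ Cv)
    (hinactive : ∀ C ∈ 𝒞I, C ≠ Cv →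
      2 ≤ (T₀.edgeFinset.filter (fun e => Crosses e C)).card) :
    (Cv ∈ 𝒞A →
      (∑ C ∈ 𝒞A, ((T₀.edgeFinset.filter (fun e => Crosses e C)).card : ℤ)) ≤
        2 * (𝒞A.card : ℤ) - 2) ∧
    (Cv ∈ 𝒞I →
      (∑ C ∈ 𝒞A, ((T₀.edgeFinset.filter (fun e => Crosses e C)).card : ℤ)) ≤
        2 * (𝒞A.card : ℤ) - 1) := by
  have htotal :=
    sum_card_filter_crosses_add_two htree (fun C hC C' hC' => hdisj C hC C' hC') hcover hconn
  rw [sum_union hAI, card_union_of_disjoint hAI] at htotal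
  rw [← Nat.cast_sum]
  refine ⟨fun hCvA => ?_, fun hCvI => ?_⟩
  · have hI := card_nsmul_le_sum 𝒞I _ 2 fun C hC =>
      hinactive C hC (ne_of_mem_of_not_mem hC (disjoint_left.mp hAI hCvA))
    rw [smul_eq_mul] at hI
    omega
  · obtain ⟨C', hC'⟩ := hAne
    obtain ⟨⟨y, hy⟩⟩ := (hconn C' (mem_union_left _ hC')).nonempty
    have hyCv : y ∉ Cv := disjoint_left.mp
      (hdisj C' (mem_union_left _ hC') Cv (mem_union_right _ hCvI)
        (ne_of_mem_of_not_mem hC' (disjoint_right.mp hAI hCvI))) hy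
    have hCv := card_filter_crosses_pos htree.1 hvCv hyCv
    have hrest := card_nsmul_le_sum (𝒞I.erase Cv) _ 2 fun C hC =>
      hinactive C (mem_of_mem_erase hC) (ne_of_mem_erase hC)
    rw [smul_eq_mul] at hrest
    rw [← add_sum_erase _ _ hCvI] at htotal
    have := card_erase_add_one hCvI
    omega

/-- Active-component degree bound (the key claim in Lemma 5 of the paper). -/
theorem active_component_degree_bound
    {V : Type*} [Fintype V] [DecidableEq V]
    (T₀ : SimpleGraph V) (htree : T₀.IsTree) (v : V)
    (𝒞A 𝒞I : Finset (Finset V))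
    (hAI : Disjoint 𝒞A 𝒞I)
    (hdisj : ∀ C ∈ 𝒞A ∪ 𝒞I, ∀ C' ∈ 𝒞A ∪ 𝒞I, C ≠ C' → Disjoint C C')
    (hcover : (𝒞A ∪ 𝒞I).biUnion id = Finset.univ)
    (hconn : ∀ C ∈ 𝒞A ∪ 𝒞I, (T₀.induce (C : Set V)).Connected)
    (hAne : 𝒞A.Nonempty)
    (Cv : Finset V) (hCv : Cv ∈ 𝒞A ∪ 𝒞I) (hvCv : v ∈ Cv)
    (hinactive : ∀ C ∈ 𝒞I, C ≠ Cv →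
      2 ≤ (T₀.edgeFinset.filter (fun e => Crosses e C)).card) :
    (Cv ∈ 𝒞A →
      (∑ C ∈ 𝒞A, ((T₀.edgeFinset.filter (fun e => Crosses e C)).card : ℤ)) ≤
        2 * (𝒞A.card : ℤ) - 2) ∧
    (Cv ∈ 𝒞I →
      (∑ C ∈ 𝒞A, ((T₀.edgeFinset.filter (fun e => Crosses e C)).card : ℤ)) ≤
        2 * (𝒞A.card : ℤ) - 1) :=
  active_component_degree_bound_general T₀ htree v 𝒞A 𝒞I hAI hdisj hcover hconn hAne Cv hvCv
    hinactive
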